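/- arXiv:0801.2305 — 4 statements merged into one kernel-verified Lean document; each statement's English description precedes it below -/
import Mathlib

section
/- Dependent products along tracked maps with recursively-bounded fibers exist: let f : (B,β) → (A,α) be a morphism of assemblies, g : (C,γ) → (A,α) arbitrary; define E = { (a, φ) : a ∈ A, φ : f⁻¹(a) → C_a, and ∃n, n₀ ∈ α(a) and ∀ b ∈ f⁻¹(a), m ∈ β(b), n₁(m) is defined and n₁(m) ∈ γ(φ b) }, with η(a,φ) the set of such n. Then (E, η) with the projection to (A,α) and the tracked evaluation map is an exponential g^f in the slice category of assemblies over (A,α). -/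
/-- Kleene application: evaluate the partial recursive function with code `n` at `m`. -/
def kapp (n m : ℕ) : Part ℕ := (Denumerable.ofNat Nat.Partrec.Code n).eval m

/-- An assembly over Kleene's first algebra. -/
structure Assembly where
  carrier : Type
  rel : ℕ → carrier → Prop
  surj : ∀ a, ∃ n, rel n a

/-- `r` tracks the function `f` between assemblies. -/
def Tracks (B A : Assembly) (r : ℕ) (f : B.carrier → A.carrier) : Prop :=
  ∀ b n, B.rel n b → ∃ k, k ∈ kapp r n ∧ A.rel k (f b)

/-- A function between assemblies is tracked (is a morphism of assemblies). -/
def Tracked (B A : Assembly) (f : B.carrier → A.carrier) : Prop :=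
  ∃ r, Tracks B A r f

/-- Pullback of two assembly maps into a common assembly, with paired realizers. -/
def Assembly.pb (P Q R : Assembly) (u : P.carrier → R.carrier)
    (v : Q.carrier → R.carrier) : Assembly where
  carrier := {x : P.carrier × Q.carrier // u x.1 = v x.2}
  rel n x := P.rel n.unpair.1 x.val.1 ∧ Q.rel n.unpair.2 x.val.2
  surj := by
    rintro ⟨⟨p, q⟩, _⟩
    obtain ⟨n, hn⟩ := P.surj p
    obtain ⟨m, hm⟩ := Q.surj q
    exact ⟨Nat.pair n m, by simpa using hn, by simpa using hm⟩

/-- The realizability condition on a pair `(a, φ)` with `φ : f⁻¹(a) → C_a`: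
`n₀ ∈ α(a)` and for all `b ∈ f⁻¹(a)` and `m ∈ β(b)`, `n₁(m)` is defined
and `n₁(m) ∈ γ(φ b)`. -/
def expRel (A B C : Assembly) (f : B.carrier → A.carrier) (g : C.carrier → A.carrier)
    (n : ℕ) (a : A.carrier)
    (φ : {b : B.carrier // f b = a} → {c : C.carrier // g c = a}) : Prop :=
  A.rel n.unpair.1 a ∧
  ∀ (b : {b : B.carrier // f b = a}) (m : ℕ), B.rel m b.val →
    ∃ k, k ∈ kapp n.unpair.2 m ∧ C.rel k (φ b).val

/-- The exponential assembly `(E, η)` of `g` by `f` over `(A, α)`. -/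
def expAsm (A B C : Assembly) (f : B.carrier → A.carrier)
    (g : C.carrier → A.carrier) : Assembly where
  carrier := {p : Σ a : A.carrier, ({b : B.carrier // f b = a} → {c : C.carrier // g c = a}) //
    ∃ n, expRel A B C f g n p.1 p.2}
  rel n p := expRel A B C f g n p.val.1 p.val.2
  surj p := p.property

/-- The projection of the exponential assembly to the base. -/
def expProj (A B C : Assembly) (f : B.carrier → A.carrier) (g : C.carrier → A.carrier) :
    (expAsm A B C f g).carrier → A.carrier :=
  fun e => e.val.1

/-- The evaluation map on the pullback of the exponential with `f`. -/
def expEv (A B C : Assembly) (f : B.carrier → A.carrier) (g : C.carrier → A.carrier) :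
    ((expAsm A B C f g).pb B A (expProj A B C f g) f).carrier → C.carrier :=
  fun x => (x.val.1.val.2 ⟨x.val.2, x.property.symm⟩).val

/-!
A realizer of `(a, φ)` in `E` pairs a realizer of `a` with a code sending realizers of
`b ∈ f⁻¹(a)` to realizers of `φ b`; projection and evaluation are then tracked by projecting
and by applying that code. The transpose of `h : D ×_A B → C` sends `x` to
`(d x, b ↦ h (x, b))`, and is tracked because currying a tracker of `h` at a realizer of `x`
(the s-m-n theorem) yields the second component of a realizer. Uniqueness holds because a
point of `E` is determined by its base point and its fibre map.
-/

open Nat.Partrec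

lemma kapp_encode (c : Code) (m : ℕ) : kapp (Encodable.encode c) m = c.eval m := by
  simp [kapp]

lemma partrec₂_kapp : Partrec₂ kapp :=
  Code.eval_part.comp ((Computable.ofNat Code).comp Computable.fst) Computable.snd

lemma exists_kapp_eq_of_partrec {F : ℕ →. ℕ} (hF : Partrec F) : ∃ r, ∀ n, kapp r n = F n := by
  obtain ⟨c, hc⟩ := Code.exists_code.mp (Partrec.nat_iff.mp hF)
  exact ⟨Encodable.encode c, fun n => by rw [kapp_encode, hc]⟩

def kcurry (r p : ℕ) : ℕ := Encodable.encode ((Denumerable.ofNat Code r).curry p)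

lemma kapp_kcurry (r p m : ℕ) : kapp (kcurry r p) m = kapp r (Nat.pair p m) := by
  rw [kcurry, kapp_encode, Code.eval_curry, kapp]

lemma primrec_kcurry (r : ℕ) : Primrec (kcurry r) :=
  Primrec.encode.comp (Code.primrec₂_curry.comp (Primrec.const _) Primrec.id)

lemma tracked_of_partrec {B A : Assembly} {u : B.carrier → A.carrier} {F : ℕ →. ℕ}
    (hF : Partrec F) (hFu : ∀ b n, B.rel n b → ∃ k ∈ F n, A.rel k (u b)) : Tracked B A u := by
  obtain ⟨r, hr⟩ := exists_kapp_eq_of_partrec hF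
  exact ⟨r, fun b n hn => by simpa only [hr] using hFu b n hn⟩

section Exponential

variable {A B C : Assembly} {f : B.carrier → A.carrier} {g : C.carrier → A.carrier}

lemma tracked_expProj : Tracked (expAsm A B C f g) A (expProj A B C f g) :=
  tracked_of_partrec (F := fun n => Part.some n.unpair.1)
    (Computable.fst.comp Computable.unpair).partrec
    fun _ _ hn => ⟨_, Part.mem_some _, hn.1⟩

lemma tracked_expEv :
    Tracked ((expAsm A B C f g).pb B A (expProj A B C f g) f) C (expEv A B C f g) :=
  tracked_of_partrec (F := fun n => kapp n.unpair.1.unpair.2 n.unpair.2)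
    (partrec₂_kapp.comp
      (Computable.snd.comp <| Computable.unpair.comp <| Computable.fst.comp Computable.unpair)
      (Computable.snd.comp Computable.unpair))
    fun x n hn => hn.1.2 ⟨x.val.2, x.property.symm⟩ n.unpair.2 hn.2

lemma expAsm_ext {e₁ e₂ : (expAsm A B C f g).carrier} (hbase : e₁.val.1 = e₂.val.1)
    (hfib : ∀ b (hb : f b = e₁.val.1),
      (e₁.val.2 ⟨b, hb⟩).val = (e₂.val.2 ⟨b, hb.trans hbase⟩).val) : e₁ = e₂ := by
  obtain ⟨⟨a, φ₁⟩, _⟩ := e₁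
  obtain ⟨⟨_, φ₂⟩, _⟩ := e₂
  dsimp only at hbase hfib
  subst hbase
  obtain rfl : φ₁ = φ₂ := funext fun b => Subtype.ext (hfib b.val b.property)
  rfl

variable {D : Assembly} {d : D.carrier → A.carrier}

lemma expAsm_map_ext {e₁ e₂ : D.carrier → (expAsm A B C f g).carrier}
    (hc₁ : (fun x => (e₁ x).val.1) = d) (hc₂ : (fun x => (e₂ x).val.1) = d)
    (heval : ∀ x : (D.pb B A d f).carrier,
      ((e₁ x.val.1).val.2 ⟨x.val.2, ((congrFun hc₁ x.val.1).trans x.property).symm⟩).val =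
        ((e₂ x.val.1).val.2 ⟨x.val.2, ((congrFun hc₂ x.val.1).trans x.property).symm⟩).val) :
    e₁ = e₂ :=
  funext fun x => expAsm_ext ((congrFun hc₁ x).trans (congrFun hc₂ x).symm) fun b hb =>
    heval ⟨(x, b), (hb.trans (congrFun hc₁ x)).symm⟩

variable (h : (D.pb B A d f).carrier → C.carrier) (hover : ∀ x, g (h x) = d x.val.1)

def transposeFiber (x : D.carrier) : {b // f b = d x} → {c // g c = d x} :=
  fun b => ⟨h ⟨(x, b.val), b.property.symm⟩, hover _⟩

lemma expRel_transposeFiber {rh : ℕ} (hrh : Tracks (D.pb B A d f) C rh h) {x : D.carrier}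
    {p k : ℕ} (hp : D.rel p x) (hk : A.rel k (d x)) :
    expRel A B C f g (Nat.pair k (kcurry rh p)) (d x) (transposeFiber h hover x) := by
  refine ⟨by simpa using hk, fun b m hm => ?_⟩
  obtain ⟨k', hk', hc⟩ := hrh ⟨(x, b.val), b.property.symm⟩ (Nat.pair p m)
    ⟨by simpa using hp, by simpa using hm⟩
  exact ⟨k', by simpa [kapp_kcurry] using hk', hc⟩

def expTranspose (hd : Tracked D A d) (hh : Tracked (D.pb B A d f) C h) :
    D.carrier → (expAsm A B C f g).carrier :=
  fun x => ⟨⟨d x, transposeFiber h hover x⟩, by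
    obtain ⟨rd, hrd⟩ := hd
    obtain ⟨rh, hrh⟩ := hh
    obtain ⟨p, hp⟩ := D.surj x
    obtain ⟨k, -, hk⟩ := hrd x p hp
    exact ⟨_, expRel_transposeFiber h hover hrh hp hk⟩⟩

lemma tracked_expTranspose (hd : Tracked D A d) (hh : Tracked (D.pb B A d f) C h) :
    Tracked D (expAsm A B C f g) (expTranspose h hover hd hh) := by
  obtain ⟨rd, hrd⟩ := id hd
  obtain ⟨rh, hrh⟩ := id hh
  refine tracked_of_partrec (F := fun p => (kapp rd p).map fun k => Nat.pair k (kcurry rh p))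
    ((partrec₂_kapp.comp (Computable.const rd) Computable.id).map
      (Primrec₂.natPair.comp Primrec.snd ((primrec_kcurry rh).comp Primrec.fst)).to_comp.to₂)
    fun x p hp => ?_
  obtain ⟨k, hk, hak⟩ := hrd x p hp
  exact ⟨_, Part.mem_map _ hk, expRel_transposeFiber h hover hrh hp hak⟩

end Exponential

theorem expAsm_is_exponential_general (A B C : Assembly) (f : B.carrier → A.carrier)
    (g : C.carrier → A.carrier) :
    Tracked (expAsm A B C f g) A (expProj A B C f g) ∧
    Tracked ((expAsm A B C f g).pb B A (expProj A B C f g) f) C (expEv A B C f g) ∧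
    (∀ x, g (expEv A B C f g x) = expProj A B C f g x.val.1) ∧
    ∀ (D : Assembly) (d : D.carrier → A.carrier), Tracked D A d →
      ∀ h : (D.pb B A d f).carrier → C.carrier,
        Tracked (D.pb B A d f) C h →
        (∀ x, g (h x) = d x.val.1) →
        ∃ h' : D.carrier → (expAsm A B C f g).carrier,
          Tracked D (expAsm A B C f g) h' ∧
          ∃ hcomm : (fun x => (h' x).val.1) = d,
            (∀ x : (D.pb B A d f).carrier,
              h x = ((h' x.val.1).val.2
                ⟨x.val.2, ((congrFun hcomm x.val.1).trans x.property).symm⟩).val) ∧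
            ∀ h'' : D.carrier → (expAsm A B C f g).carrier,
              Tracked D (expAsm A B C f g) h'' →
              ∀ hcomm'' : (fun x => (h'' x).val.1) = d,
                (∀ x : (D.pb B A d f).carrier,
                  h x = ((h'' x.val.1).val.2
                    ⟨x.val.2, ((congrFun hcomm'' x.val.1).trans x.property).symm⟩).val) →
                h'' = h' := by
  refine ⟨tracked_expProj, tracked_expEv, fun x => (x.val.1.val.2 _).property, ?_⟩
  intro D d hd h hh hover
  refine ⟨expTranspose h hover hd hh, tracked_expTranspose h hover hd hh, rfl, fun _ => rfl, ?_⟩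
  intro h'' _ hcomm'' heval''
  exact expAsm_map_ext hcomm'' rfl fun x => (heval'' x).symm

/-- `(E, η)` with the projection to `(A, α)` and the tracked evaluation map is an
exponential `g^f` in the slice category of assemblies over `(A, α)`: the projection and
evaluation are tracked, evaluation lies over `A`, and for every tracked map `d : D → A`
and every tracked map `h` over `A` from the pullback `D ×_A B` to `C`, there is a unique
tracked transpose `D → E` over `A` whose composite with evaluation is `h`. -/
theorem expAsm_is_exponential (A B C : Assembly) (f : B.carrier → A.carrier)
    (g : C.carrier → A.carrier) (hf : Tracked B A f) (hg : Tracked C A g) :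
    Tracked (expAsm A B C f g) A (expProj A B C f g) ∧
    Tracked ((expAsm A B C f g).pb B A (expProj A B C f g) f) C (expEv A B C f g) ∧
    (∀ x, g (expEv A B C f g x) = expProj A B C f g x.val.1) ∧
    ∀ (D : Assembly) (d : D.carrier → A.carrier), Tracked D A d →
      ∀ h : (D.pb B A d f).carrier → C.carrier,
        Tracked (D.pb B A d f) C h →
        (∀ x, g (h x) = d x.val.1) →
        ∃ h' : D.carrier → (expAsm A B C f g).carrier,
          Tracked D (expAsm A B C f g) h' ∧
          ∃ hcomm : (fun x => (h' x).val.1) = d,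
            (∀ x : (D.pb B A d f).carrier,
              h x = ((h' x.val.1).val.2
                ⟨x.val.2, ((congrFun hcomm x.val.1).trans x.property).symm⟩).val) ∧
            ∀ h'' : D.carrier → (expAsm A B C f g).carrier,
              Tracked D (expAsm A B C f g) h'' →
              ∀ hcomm'' : (fun x => (h'' x).val.1) = d,
                (∀ x : (D.pb B A d f).carrier,
                  h x = ((h'' x.val.1).val.2
                    ⟨x.val.2, ((congrFun hcomm'' x.val.1).trans x.property).symm⟩).val) →
                h'' = h' :=
  expAsm_is_exponential_general A B C f g
end

section
/- Kleene realizability of natural-number statements transfers along the recursion theorem to decorate well-founded trees uniformly: for the W-type W over a map f : B → A of sets, together with a realizability relation α ⊆ ℕ × A where every a is realized by 0, and β ⊆ ℕ × B arbitrary surjective, define δ ⊆ ℕ × W inductively by: n ∈ δ(sup_a t) iff n₀ ∈ α(a) and for all b ∈ f⁻¹(a) and m ∈ β(b), n₁(m) is defined and n₁(m) ∈ δ(t b). Then there exists a single natural number e such that e ∈ δ(w) for every w ∈ W; in particular δ is surjective. -/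
/-- The W-type of well-founded trees for a map `f : B → A` of sets. -/
inductive WTy {A B : Type} (f : B → A) : Type
  | sup (a : A) (t : {b : B // f b = a} → WTy f) : WTy f

/-- The decoration relation `δ ⊆ ℕ × W`, defined inductively:
`n ∈ δ(sup_a t)` iff `n₀ ∈ α(a)` and for all `b ∈ f⁻¹(a)` and `m ∈ β(b)`,
`n₁(m)` is defined and `n₁(m) ∈ δ(t b)`. -/
inductive Dec {A B : Type} (f : B → A) (α : ℕ → A → Prop) (β : ℕ → B → Prop) :
    ℕ → WTy f → Prop
  | sup (n : ℕ) (a : A) (t : {b : B // f b = a} → WTy f)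
      (h₁ : α n.unpair.1 a)
      (hdom : ∀ (b : {b : B // f b = a}) (m : ℕ), β m b.val → (kapp n.unpair.2 m).Dom)
      (h₂ : ∀ (b : {b : B // f b = a}) (m : ℕ) (hm : β m b.val),
        Dec f α β ((kapp n.unpair.2 m).get (hdom b m hm)) (t b)) :
      Dec f α β n (WTy.sup a t)

/-- If every `a ∈ A` is realized by `0`, then (by the recursion theorem, via a solution
of `e = ⟨0, λm. e⟩`) there is a single natural number `e` decorating every well-founded
tree; in particular the decoration relation `δ` is surjective. -/
theorem uniform_decoration {A B : Type} (f : B → A)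
    (α : ℕ → A → Prop) (β : ℕ → B → Prop)
    (hα : ∀ a, α 0 a) (hβ : ∀ b, ∃ n, β n b) :
    (∃ e : ℕ, ∀ w : WTy f, Dec f α β e w) ∧
    ∀ w : WTy f, ∃ n, Dec f α β n w := by
  have hprim : Primrec (fun c : Nat.Partrec.Code => Nat.pair 0 (Encodable.encode c)) :=
    Primrec₂.natPair.comp (Primrec.const 0) Primrec.encode
  have hcomp : Computable₂ (fun (c : Nat.Partrec.Code) (_ : ℕ) =>
      Nat.pair 0 (Encodable.encode c)) :=
    (hprim.to_comp.comp Computable.fst).to₂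
  obtain ⟨c, hc⟩ := Nat.Partrec.Code.fixed_point₂
    (f := fun c _ => Part.some (Nat.pair 0 (Encodable.encode c)))
    hcomp.partrec₂
  set e := Nat.pair 0 (Encodable.encode c) with he
  have hkapp : ∀ m, kapp e.unpair.2 m = Part.some e := by
    intro m
    simp only [he, Nat.unpair_pair, kapp, Denumerable.ofNat_encode]
    rw [hc]
  have key : ∀ w : WTy f, Dec f α β e w := by
    intro w
    induction w with
    | sup a t ih =>
      have hdom : ∀ (b : {b : B // f b = a}) (m : ℕ), β m b.val →
          (kapp e.unpair.2 m).Dom := by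
        intro b m _; rw [hkapp]; trivial
      refine Dec.sup e a t ?_ hdom ?_
      · simpa [he] using hα a
      · intro b m hm
        have : (kapp e.unpair.2 m).get (hdom b m hm) = e := by
          simp [hkapp]
        rw [this]; exact ih b
  exact ⟨⟨e, key⟩, fun w => ⟨e, key w⟩⟩
end

section
/- Subcountability of all sets refutes the power set axiom: in any model of CZF (in fact, assuming Extensionality, Pairing, Union, Bounded Separation, Strong Collection, Subset Collection, and Infinity), if every set is subcountable (the surjective image of a subset of ω) then the power set of ω does not exist, and moreover the power set of a one-element set {∅} does not exist. -/
section SetTheory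

variable {M : Type} (mem : M → M → Prop)

/-- `p` is the unordered pair `{x, y}`. -/
def IsUPair (p x y : M) : Prop := ∀ z, mem z p ↔ (z = x ∨ z = y)

/-- `p` is the Kuratowski ordered pair `⟨x, y⟩ = {{x}, {x, y}}`. -/
def IsOPair (p x y : M) : Prop :=
  ∃ q r, IsUPair mem q x x ∧ IsUPair mem r x y ∧ IsUPair mem p q r

/-- `f` is (the graph of) a surjective function from `s` onto `a`. -/
def IsSurjFn (f s a : M) : Prop :=
  (∀ p, mem p f → ∃ x y, mem x s ∧ mem y a ∧ IsOPair mem p x y) ∧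
  (∀ x, mem x s → ∃ y, mem y a ∧ ∃ p, mem p f ∧ IsOPair mem p x y) ∧
  (∀ x y y', (∃ p, mem p f ∧ IsOPair mem p x y) →
    (∃ p, mem p f ∧ IsOPair mem p x y') → y = y') ∧
  (∀ y, mem y a → ∃ x, mem x s ∧ ∃ p, mem p f ∧ IsOPair mem p x y)

/-- The axioms of `CZF` used here: Extensionality, Pairing, Union, (Bounded)
Separation, Strong Collection, Subset Collection, and Infinity (for a distinguished
set `ω`), stated for a first-order structure `(M, mem)`. -/
structure CZFAxioms (ω : M) : Prop where
  ext : ∀ a b, (∀ x, mem x a ↔ mem x b) → a = b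
  pairing : ∀ a b, ∃ x, ∀ y, mem y x ↔ (y = a ∨ y = b)
  union : ∀ a, ∃ x, ∀ y, mem y x ↔ ∃ z, mem z a ∧ mem y z
  sep : ∀ (φ : M → Prop) (a : M), ∃ x, ∀ y, mem y x ↔ (mem y a ∧ φ y)
  strongCollection : ∀ (φ : M → M → Prop) (a : M),
    (∀ x, mem x a → ∃ y, φ x y) →
    ∃ b, (∀ x, mem x a → ∃ y, mem y b ∧ φ x y) ∧
         (∀ y, mem y b → ∃ x, mem x a ∧ φ x y)
  subsetCollection : ∀ a b : M, ∃ c : M, ∀ (φ : M → M → Prop),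
    (∀ x, mem x a → ∃ y, mem y b ∧ φ x y) →
    ∃ d, mem d c ∧ (∀ x, mem x a → ∃ y, mem y d ∧ φ x y) ∧
         (∀ y, mem y d → ∃ x, mem x a ∧ φ x y)
  infinity : (∃ x, mem x ω) ∧ ∀ x, mem x ω → ∃ y, mem y ω ∧ mem x y

/-- Injectivity of Kuratowski ordered pairs, at the level of the defining
properties (no extensionality needed). -/
lemma opair_inj {p x y x' y' : M} (hp : IsOPair mem p x y)
    (hp' : IsOPair mem p x' y') : x = x' ∧ y = y' := by
  obtain ⟨q, r, hq0, memr, hpq⟩ := hp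
  obtain ⟨q', r', hq0', memr', hpq'⟩ := hp'
  have E : ∀ z, (z = q ∨ z = r) ↔ (z = q' ∨ z = r') :=
    fun z => (hpq z).symm.trans (hpq' z)
  have memq : ∀ z, mem z q ↔ z = x := fun z => (hq0 z).trans or_self_iff
  have memq' : ∀ z, mem z q' ↔ z = x' := fun z => (hq0' z).trans or_self_iff
  have hqq : q = q' ∨ q = r' := (E q).mp (Or.inl rfl)
  have hxx : x = x' := by
    rcases hqq with h1 | h1
    · have hx : mem x q := (memq x).mpr rfl
      rw [h1] at hx
      exact (memq' x).mp hx
    · have hx : mem x' r' := (memr' x').mpr (Or.inl rfl)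
      rw [← h1] at hx
      exact ((memq x').mp hx).symm
  refine ⟨hxx, ?_⟩
  rcases hqq with h1 | h1
  · -- q = q'
    have hrr : r = q' ∨ r = r' := (E r).mp (Or.inr rfl)
    have hr'r : r' = q ∨ r' = r := (E r').mpr (Or.inr rfl)
    rcases hrr with h2 | h2
    · -- r = q', so y = x'
      have hy : mem y r := (memr y).mpr (Or.inr rfl)
      rw [h2] at hy
      have hyx' : y = x' := (memq' y).mp hy
      have hy' : mem y' r' := (memr' y').mpr (Or.inr rfl)
      rcases hr'r with h3 | h3
      · rw [h3] at hy'
        have : y' = x := (memq y').mp hy'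
        rw [hyx', ← hxx, ← this]
      · rw [h3] at hy'
        rcases (memr y').mp hy' with h4 | h4
        · rw [hyx', ← hxx, ← h4]
        · exact h4.symm
    · -- r = r'
      have hy : mem y r := (memr y).mpr (Or.inr rfl)
      rw [h2] at hy
      rcases (memr' y).mp hy with h3 | h3
      · -- y = x'
        have hy' : mem y' r' := (memr' y').mpr (Or.inr rfl)
        rw [← h2] at hy'
        rcases (memr y').mp hy' with h4 | h4
        · rw [h3, ← hxx, ← h4]
        · exact h4.symm
      · exact h3
  · -- q = r', so x' = x and y' = x
    have hy'x : y' = x := by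
      have hy' : mem y' r' := (memr' y').mpr (Or.inr rfl)
      rw [← h1] at hy'
      exact (memq y').mp hy'
    have hq'q : q' = q ∨ q' = r := (E q').mpr (Or.inl rfl)
    have hyx : y = x := by
      rcases hq'q with h2 | h2
      · have hrr : r = q' ∨ r = r' := (E r).mp (Or.inr rfl)
        have hy : mem y r := (memr y).mpr (Or.inr rfl)
        rcases hrr with h3 | h3
        · rw [h3, h2] at hy
          exact (memq y).mp hy
        · rw [h3] at hy
          rcases (memr' y).mp hy with h4 | h4
          · rw [h4, ← hxx]
          · rw [h4, hy'x]
      · have hy : mem y r := (memr y).mpr (Or.inr rfl)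
        rw [← h2] at hy
        have : y = x' := (memq' y).mp hy
        rw [this, ← hxx]
    rw [hyx, hy'x]

/-- `d` is a graph (set of ordered pairs) and `n` is related by `d` to a set
containing `e`. -/
def InGraph (e n d : M) : Prop :=
  ∃ p, mem p d ∧ ∃ y, IsOPair mem p n y ∧ mem e y

/-- The diagonal predicate: `n` is not related by (any value of) `g` at `n`. -/
def Diag (g e n : M) : Prop :=
  ∀ d, (∃ p, mem p g ∧ IsOPair mem p n d) → ¬ InGraph mem e n d

/-- In the classical metatheory, the Lean rendering of this CZF fragment (with
separation and subset collection for arbitrary predicates) together with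
subcountability of every set is contradictory, by a diagonal argument through
a full set of graphs `ω ⇒ {∅, {∅}}` produced by Subset Collection. -/
lemma subcountable_inconsistent {ω : M} (h : CZFAxioms mem ω)
    (hsub : ∀ a : M, ∃ s f : M, (∀ y, mem y s → mem y ω) ∧ IsSurjFn mem f s a) :
    False := by
  classical
  -- an empty set e
  obtain ⟨e, he⟩ := h.sep (fun _ => False) ω
  have he' : ∀ z, ¬ mem z e := fun z hz => ((he z).mp hz).2
  -- u = {e}
  obtain ⟨u, hu0⟩ := h.pairing e e
  have hu : ∀ y, mem y u ↔ y = e := fun y => (hu0 y).trans or_self_iff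
  -- ordered pairs always exist
  have opair_ex : ∀ n y : M, ∃ p, IsOPair mem p n y := by
    intro n y
    obtain ⟨q, hq⟩ := h.pairing n n
    obtain ⟨r, hr⟩ := h.pairing n y
    obtain ⟨p, hp⟩ := h.pairing q r
    exact ⟨p, q, r, hq, hr, hp⟩
  -- a set b containing, for each n ∈ ω, ordered pairs ⟨n, e⟩ and ⟨n, u⟩
  obtain ⟨b0, hb0, -⟩ := h.strongCollection
    (fun n w => ∃ p1 p2, mem p1 w ∧ mem p2 w ∧ IsOPair mem p1 n e ∧ IsOPair mem p2 n u) ω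
    (by
      intro n _
      obtain ⟨p1, hp1⟩ := opair_ex n e
      obtain ⟨p2, hp2⟩ := opair_ex n u
      obtain ⟨w, hw⟩ := h.pairing p1 p2
      exact ⟨w, p1, p2, (hw p1).mpr (Or.inl rfl), (hw p2).mpr (Or.inr rfl), hp1, hp2⟩)
  obtain ⟨b, hb⟩ := h.union b0
  have hbmem : ∀ n, mem n ω → ∀ y : M, (y = e ∨ y = u) →
      ∃ p, mem p b ∧ IsOPair mem p n y := by
    intro n hn y hy
    obtain ⟨w, hwb0, p1, p2, hp1w, hp2w, hp1, hp2⟩ := hb0 n hn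
    rcases hy with rfl | rfl
    · exact ⟨p1, (hb p1).mpr ⟨w, hwb0, hp1w⟩, hp1⟩
    · exact ⟨p2, (hb p2).mpr ⟨w, hwb0, hp2w⟩, hp2⟩
  -- a full set c of graphs from ω to {e, u}
  obtain ⟨c, hc⟩ := h.subsetCollection ω b
  -- c is subcountable: a surjection g from s ⊆ ω onto c
  obtain ⟨s, g, hs, hg⟩ := hsub c
  -- encode the diagonal predicate as an element d0 of c
  obtain ⟨d0, hd0c, hA, hB⟩ := hc
    (fun n p => ∃ y, (y = e ∨ y = u) ∧ IsOPair mem p n y ∧ (mem e y ↔ Diag mem g e n))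
    (by
      intro n hn
      by_cases hψ : Diag mem g e n
      · obtain ⟨p, hpb, hp⟩ := hbmem n hn u (Or.inr rfl)
        exact ⟨p, hpb, u, Or.inr rfl, hp, iff_of_true ((hu e).mpr rfl) hψ⟩
      · obtain ⟨p, hpb, hp⟩ := hbmem n hn e (Or.inl rfl)
        exact ⟨p, hpb, e, Or.inl rfl, hp, iff_of_false (he' e) hψ⟩)
  -- d0 decodes the diagonal predicate
  have key : ∀ n, mem n ω → (InGraph mem e n d0 ↔ Diag mem g e n) := by
    intro n hn
    constructor
    · rintro ⟨p, hpd, y, hpy, hey⟩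
      obtain ⟨n', hn', y', hy', hp', hiff⟩ := hB p hpd
      obtain ⟨hnn, hyy⟩ := opair_inj mem hpy hp'
      subst hnn
      rw [hyy] at hey
      exact hiff.mp hey
    · intro hψ
      obtain ⟨p, hpd, y, hy, hp, hiff⟩ := hA n hn
      exact ⟨p, hpd, y, hp, hiff.mpr hψ⟩
  -- d0 is hit by g, yielding the diagonal contradiction
  obtain ⟨n, hns, p, hpg, hpn⟩ := hg.2.2.2 d0 hd0c
  have hnω := hs n hns
  by_cases hψ : Diag mem g e n
  · exact hψ d0 ⟨p, hpg, hpn⟩ ((key n hnω).mpr hψ)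
  · have hex : ∃ d, (∃ p, mem p g ∧ IsOPair mem p n d) ∧ InGraph mem e n d := by
      unfold Diag at hψ
      push_neg at hψ
      exact hψ
    obtain ⟨d, hGd, hInd⟩ := hex
    have hdd : d = d0 := hg.2.2.1 n d d0 hGd ⟨p, hpg, hpn⟩
    rw [hdd] at hInd
    exact hψ ((key n hnω).mp hInd)

/-- Subcountability of all sets refutes the power set axiom: in any model of (this
fragment of) `CZF`, if every set is the surjective image of a subset of `ω`, then the
power set of `ω` does not exist, and the power set of the one-element set `{∅}` does
not exist either. -/
theorem subcountable_refutes_powerset {ω : M} (h : CZFAxioms mem ω)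
    (hsub : ∀ a : M, ∃ s f : M, (∀ y, mem y s → mem y ω) ∧ IsSurjFn mem f s a) :
    (¬ ∃ x : M, ∀ y, mem y x ↔ (∀ z, mem z y → mem z ω)) ∧
    ∀ e u : M, (∀ z, ¬ mem z e) → (∀ y, mem y u ↔ y = e) →
      ¬ ∃ x : M, ∀ y, mem y x ↔ (∀ z, mem z y → mem z u) :=
  (subcountable_inconsistent mem h hsub).elim

end SetTheory
end

section
/- Shanin's principle for assemblies: every subobject of an assembly (X, χ) in the category of assemblies is covered by a ¬¬-closed one. Concretely, given a function Y : X × ℕ → P(ℕ) representing a subobject of (X,χ) × ℕ (with a tracking code r such that every m ∈ Y(x,n) satisfies r(m) = ⟨k₀,k₁⟩ with k₀ ∈ χ(x) and k₁ = n), the partitioned assembly P = {(x,n) : n = ⟨n₀,n₁⟩ and n₁ ∈ Y(x,n₀)} with π(x,n) = {⟨k₀,n⟩ : k₀ ∈ χ(x)} admits a tracked surjection onto the subobject Y commuting with the projections to X. -/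
/-- `f` is a cover: realizers of `a` are recursively transformed into realizers of
elements of the fiber over `a`. -/
def IsCover (B A : Assembly) (f : B.carrier → A.carrier) : Prop :=
  ∃ s : ℕ, ∀ a n, A.rel n a → ∃ b, f b = a ∧ ∃ k, k ∈ kapp s n ∧ B.rel k b

variable (X : Assembly) (Y : X.carrier × ℕ → Set ℕ)

/-- The subobject of `(X, χ) × ℕ` represented by the realizer assignment `Y`. -/
def subAsm : Assembly where
  carrier := {p : X.carrier × ℕ // (Y p).Nonempty}
  rel m p := m ∈ Y p.val
  surj p := p.property

/-- Shanin's `¬¬`-closed partitioned refinement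
`P = {(x, n) : n₁ ∈ Y(x, n₀)}` with `π(x, n) = {⟨k₀, n⟩ : k₀ ∈ χ(x)}`. -/
def shaninAsm : Assembly where
  carrier := {p : X.carrier × ℕ // p.2.unpair.2 ∈ Y (p.1, p.2.unpair.1)}
  rel m p := ∃ k₀, X.rel k₀ p.val.1 ∧ m = Nat.pair k₀ p.val.2
  surj := by
    rintro ⟨⟨x, n⟩, _⟩
    obtain ⟨k₀, hk⟩ := X.surj x
    exact ⟨Nat.pair k₀ n, k₀, hk, rfl⟩

/-- The canonical comparison map from `P` to the subobject `Y`. -/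
def shaninMap : (shaninAsm X Y).carrier → (subAsm X Y).carrier :=
  fun p => ⟨(p.val.1, p.val.2.unpair.1), ⟨p.val.2.unpair.2, p.property⟩⟩

/- Shanin's idea: a realizer `m ∈ Y(x, n)` is absorbed into the index, `(x, n) ↦ (x, ⟨n, m⟩)`,
so that over the new point the realizers are just those of `x` (paired with the index). The
map back forgets `m` but can recompute it from the index; conversely a realizer `m` of `(x, n)`
yields one of `(x, ⟨n, m⟩)` since the tracking code `r` recovers from `m` a realizer of `x`
and the number `n`. -/

theorem exists_kapp_eq {f : ℕ →. ℕ} (hf : Partrec f) : ∃ c : ℕ, ∀ m, kapp c m = f m := by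
  obtain ⟨c, hc⟩ := Nat.Partrec.Code.exists_code.mp (Partrec.nat_iff.mp hf)
  exact ⟨Encodable.encode c, fun m => by simp [kapp, hc]⟩

theorem exists_kapp_eq_some {f : ℕ → ℕ} (hf : Primrec f) :
    ∃ c : ℕ, ∀ m, kapp c m = Part.some (f m) :=
  exists_kapp_eq hf.to_comp.partrec

theorem partrec_kapp (r : ℕ) : Partrec (kapp r) :=
  Partrec.nat_iff.mpr (Nat.Partrec.Code.exists_code.mpr ⟨_, rfl⟩)

theorem exists_kapp_eq_map (r : ℕ) {g : ℕ → ℕ → ℕ} (hg : Primrec₂ g) :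
    ∃ s : ℕ, ∀ m, kapp s m = (kapp r m).map (g m) :=
  exists_kapp_eq ((partrec_kapp r).map hg.to_comp)

def shaninLift (x : X.carrier) (n m : ℕ) (hm : m ∈ Y (x, n)) : (shaninAsm X Y).carrier :=
  ⟨(x, Nat.pair n m), by simpa using hm⟩

theorem shaninMap_shaninLift (x : X.carrier) (n m : ℕ) (hm : m ∈ Y (x, n)) :
    shaninMap X Y (shaninLift X Y x n m hm) = ⟨(x, n), m, hm⟩ :=
  Subtype.ext (by simp [shaninMap, shaninLift])

theorem shaninMap_surjective : Function.Surjective (shaninMap X Y) := by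
  rintro ⟨⟨x, n⟩, m, hm⟩
  exact ⟨shaninLift X Y x n m hm, shaninMap_shaninLift X Y x n m hm⟩

theorem tracked_shaninMap : Tracked (shaninAsm X Y) (subAsm X Y) (shaninMap X Y) := by
  obtain ⟨c, hc⟩ := exists_kapp_eq_some (f := fun m => m.unpair.2.unpair.2)
    ((Primrec.snd.comp Primrec.unpair).comp (Primrec.snd.comp Primrec.unpair))
  refine ⟨c, ?_⟩
  rintro ⟨⟨x, n⟩, hp⟩ m ⟨k₀, -, rfl⟩
  exact ⟨n.unpair.2, by simp [hc], hp⟩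

theorem isCover_shaninMap (r : ℕ)
    (hr : ∀ (x : X.carrier) (n m : ℕ), m ∈ Y (x, n) →
      ∃ k, k ∈ kapp r m ∧ X.rel k.unpair.1 x ∧ k.unpair.2 = n) :
    IsCover (shaninAsm X Y) (subAsm X Y) (shaninMap X Y) := by
  have hg : Primrec₂ fun m k : ℕ => Nat.pair k.unpair.1 (Nat.pair k.unpair.2 m) :=
    Primrec₂.natPair.comp ((Primrec.fst.comp Primrec.unpair).comp Primrec.snd)
      (Primrec₂.natPair.comp ((Primrec.snd.comp Primrec.unpair).comp Primrec.snd) Primrec.fst)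
  obtain ⟨s, hs⟩ := exists_kapp_eq_map r hg
  refine ⟨s, ?_⟩
  rintro ⟨⟨x, n⟩, -⟩ m (hm : m ∈ Y (x, n))
  obtain ⟨k, hk, hkx, hkn⟩ := hr x n m hm
  refine ⟨shaninLift X Y x n m hm, shaninMap_shaninLift X Y x n m hm,
    Nat.pair k.unpair.1 (Nat.pair k.unpair.2 m), ?_, k.unpair.1, hkx, ?_⟩
  · rw [hs]
    exact Part.mem_map _ hk
  · simp [shaninLift, hkn]

/-- Shanin's principle for assemblies: every subobject of an assembly `(X, χ)` (here a
subobject `Y` of `(X, χ) × ℕ`, with a tracking code `r` sending every realizer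
`m ∈ Y(x, n)` to a pair `⟨k₀, k₁⟩` with `k₀ ∈ χ(x)` and `k₁ = n`) is covered by the
`¬¬`-closed partitioned assembly `P`: the comparison map is a tracked surjective
cover commuting with the projections to `X`. -/
theorem shanin_principle (r : ℕ)
    (hr : ∀ (x : X.carrier) (n m : ℕ), m ∈ Y (x, n) →
      ∃ k, k ∈ kapp r m ∧ X.rel k.unpair.1 x ∧ k.unpair.2 = n) :
    Tracked (shaninAsm X Y) (subAsm X Y) (shaninMap X Y) ∧
    IsCover (shaninAsm X Y) (subAsm X Y) (shaninMap X Y) ∧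
    Function.Surjective (shaninMap X Y) ∧
    ∀ p, ((shaninMap X Y) p).val.1 = p.val.1 :=
  ⟨tracked_shaninMap X Y, isCover_shaninMap X Y r hr, shaninMap_surjective X Y,
    fun _ => rfl⟩
end
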